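/- Let H be a connected hypergraph with minimal edge cut F and {V_0, V_1} a partition of V(H) into unions of vertex sets of connected components of H \ F. If H admits an Euler tour, then there exists an edge cut assignment α: F → Z_2^[2] with |α⁻¹(01)| even such that either (i) α⁻¹(01) = ∅ and (up to swapping V_0 and V_1) H^α[V_0] has an Euler tour and H^α[V_1] is empty, or (ii) α⁻¹(01) ≠ ∅ and for each i ∈ Z_2 the collapsed hypergraph H^α ∘ V_i has an Euler tour traversing the collapsed vertex u_i° via each edge in {f° : f ∈ α⁻¹(01)}. -/

import Mathlib

set_option linter.unusedSectionVars false

universe u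

variable {V : Type u} {β : Type u} {I : Type u}

/-- A hypergraph on vertex type `V` with edge-index type `β`: a finite vertex set,
a finite (multi)set of edges indexed by `β`, and an incidence map giving the
vertex set of each edge. -/
structure EHypergraph (V β : Type u) [DecidableEq V] where
  verts : Finset V
  edges : Finset β
  inc : β → Finset V
  inc_sub : ∀ e ∈ edges, inc e ⊆ verts

namespace EHypergraph

variable [DecidableEq V] [DecidableEq β] [DecidableEq I]

/-- A walk in a hypergraph: an alternating sequence of vertices and edges,
consecutive vertices being distinct and both contained in the intervening edge. -/
inductive Walk (H : EHypergraph V β) : V → V → Type u where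
  | nil (v : V) (hv : v ∈ H.verts) : Walk H v v
  | cons (u v w : V) (e : β) (he : e ∈ H.edges) (hu : u ∈ H.inc e) (hv : v ∈ H.inc e)
      (hne : u ≠ v) (p : Walk H v w) : Walk H u w

namespace Walk

/-- The list of steps `(v_{i-1}, e_i, v_i)` of a walk. -/
def steps {H : EHypergraph V β} : ∀ {u v : V}, H.Walk u v → List (V × β × V)
  | _, _, .nil _ _ => []
  | _, _, .cons u a _ e _ _ _ _ p => (u, e, a) :: p.steps

/-- The list of edges traversed by a walk, in order. -/
def edgeList {H : EHypergraph V β} {u v : V} (w : H.Walk u v) : List β :=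
  w.steps.map (fun s => s.2.1)

/-- The anchors of a walk: the vertices appearing in its sequence. -/
def anchors {H : EHypergraph V β} {u v : V} (w : H.Walk u v) : List V :=
  u :: w.steps.map (fun s => s.2.2)

end Walk

/-- A closed trail: a closed walk of length at least 2 with pairwise distinct edges. -/
structure ClosedTrail (H : EHypergraph V β) where
  base : V
  walk : H.Walk base base
  two_le : 2 ≤ walk.edgeList.length
  nodup : walk.edgeList.Nodup

/-- The closed trail `T` traverses the vertex `u` via the edge `e`, i.e. `eu` or `ue`
is a subsequence of the walk. -/
def ClosedTrail.traverses {H : EHypergraph V β} (T : H.ClosedTrail) (u : V) (e : β) : Prop :=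
  ∃ s ∈ T.walk.steps, s.2.1 = e ∧ (s.1 = u ∨ s.2.2 = u)

/-- An Euler family: a family of pairwise edge-disjoint and anchor-disjoint closed
trails jointly traversing every edge exactly once. -/
def IsEulerFamily (H : EHypergraph V β) {κ : Type} (T : κ → H.ClosedTrail) : Prop :=
  (∀ k l, k ≠ l → ∀ e, e ∈ (T k).walk.edgeList → e ∉ (T l).walk.edgeList) ∧
  (∀ k l, k ≠ l → ∀ v, v ∈ (T k).walk.anchors → v ∉ (T l).walk.anchors) ∧
  (∀ e ∈ H.edges, ∃ k, e ∈ (T k).walk.edgeList)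

def HasEulerFamily (H : EHypergraph V β) : Prop :=
  ∃ (κ : Type) (T : κ → H.ClosedTrail), H.IsEulerFamily T

/-- A non-empty Euler family. -/
def HasNonemptyEulerFamily (H : EHypergraph V β) : Prop :=
  ∃ (κ : Type) (T : κ → H.ClosedTrail), Nonempty κ ∧ H.IsEulerFamily T

/-- An Euler family is spanning if every vertex is an anchor of some trail in it. -/
def IsSpanningFamily (H : EHypergraph V β) {κ : Type} (T : κ → H.ClosedTrail) : Prop :=
  ∀ v ∈ H.verts, ∃ k, v ∈ (T k).walk.anchors

/-- An Euler tour: a closed trail traversing every edge (exactly once). -/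
def IsEulerTour (H : EHypergraph V β) (T : H.ClosedTrail) : Prop :=
  ∀ e ∈ H.edges, e ∈ T.walk.edgeList

def HasEulerTour (H : EHypergraph V β) : Prop := ∃ T : H.ClosedTrail, H.IsEulerTour T

/-- A hypergraph is connected if every two vertices are joined by a walk. -/
def Connected (H : EHypergraph V β) : Prop :=
  ∀ u ∈ H.verts, ∀ v ∈ H.verts, Nonempty (H.Walk u v)

/-- `H \ F` : deletion of the edges in `F`. -/
def edel (H : EHypergraph V β) (F : Finset β) : EHypergraph V β where
  verts := H.verts
  edges := H.edges \ F
  inc := H.inc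
  inc_sub := fun e he => H.inc_sub e (Finset.mem_sdiff.mp he).1

/-- The subhypergraph induced by a vertex set `U`. -/
def induce (H : EHypergraph V β) (U : Finset V) : EHypergraph V β where
  verts := U
  edges := H.edges.filter (fun e => (H.inc e ∩ U).Nonempty)
  inc := fun e => H.inc e ∩ U
  inc_sub := fun _ _ => Finset.inter_subset_right

/-- The degree of a vertex: the number of edges incident with it. -/
def degree (H : EHypergraph V β) (v : V) : ℕ :=
  (H.edges.filter (fun e => v ∈ H.inc e)).card

/-- `[S, V - S]_H` : the set of edges meeting both `S` and its complement. -/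
def cutSet (H : EHypergraph V β) (S : Finset V) : Finset β :=
  H.edges.filter (fun e => (H.inc e ∩ S).Nonempty ∧ (H.inc e ∩ (H.verts \ S)).Nonempty)

/-- An edge cut: a set of edges of the form `[S, V - S]_H` for nonempty proper `S`. -/
def IsEdgeCut (H : EHypergraph V β) (F : Finset β) : Prop :=
  ∃ S : Finset V, S ⊆ H.verts ∧ S.Nonempty ∧ S ≠ H.verts ∧ F = H.cutSet S

/-- A minimal edge cut: an edge cut no proper subset of which is an edge cut. -/
def IsMinimalEdgeCut (H : EHypergraph V β) (F : Finset β) : Prop :=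
  H.IsEdgeCut F ∧ ∀ F' ⊂ F, ¬ H.IsEdgeCut F'

/-- `C` is the vertex set of a connected component of `H` : nonempty, connected as an
induced subhypergraph, and closed under the edges of `H`. -/
def IsComponent (H : EHypergraph V β) (C : Finset V) : Prop :=
  C.Nonempty ∧ C ⊆ H.verts ∧ (H.induce C).Connected ∧
    ∀ e ∈ H.edges, (H.inc e ∩ C).Nonempty → H.inc e ⊆ C

/-- `P` is a partition of `V(H)` into unions of the vertex sets of the connected
components of `H \ F`. -/
def IsCompUnionPartition (H : EHypergraph V β) (F : Finset β) (P : I → Finset V) : Prop :=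
  (∀ i, (P i).Nonempty) ∧ (∀ i, P i ⊆ H.verts) ∧ (∀ v ∈ H.verts, ∃! i, v ∈ P i) ∧
    ∀ e ∈ H.edges, e ∉ F → ∀ i, (H.inc e ∩ P i).Nonempty → H.inc e ⊆ P i

/-- `P` lists exactly the vertex sets of the connected components of `H \ F`. -/
def IsComponentPartition (H : EHypergraph V β) (F : Finset β) (P : I → Finset V) : Prop :=
  H.IsCompUnionPartition F P ∧ ∀ i, ((H.edel F).induce (P i)).Connected

/-- The union `P i ∪ P j` associated with an unordered pair. -/
def pairFinset (P : I → Finset V) : Sym2 I → Finset V :=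
  Sym2.lift ⟨fun i j => P i ∪ P j, fun _ _ => Finset.union_comm _ _⟩

/-- `α : F → I^[2]` is an edge cut assignment. -/
def IsECA (H : EHypergraph V β) (F : Finset β) (P : I → Finset V) (α : β → Sym2 I) : Prop :=
  ∀ f ∈ F, ∀ i j, α f = s(i, j) →
    (H.inc f ∩ P i).Nonempty ∧ (H.inc f ∩ P j).Nonempty ∧
      (i = j → 2 ≤ (H.inc f ∩ P i).card)

/-- The hypergraph `H^α` associated with an edge cut assignment `α`:
each `f ∈ F` is replaced by `f^α = f ∩ (V_i ∪ V_j)` where `α f = ij`. -/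
def assign (H : EHypergraph V β) (F : Finset β) (P : I → Finset V) (α : β → Sym2 I) :
    EHypergraph V β where
  verts := H.verts
  edges := H.edges
  inc := fun e => if e ∈ F then H.inc e ∩ pairFinset P (α e) else H.inc e
  inc_sub := by
    intro e he
    split
    · exact Finset.inter_subset_left.trans (H.inc_sub e he)
    · exact H.inc_sub e he

/-- The multigraph `G^α` associated with an edge cut assignment `α`, viewed as a
hypergraph on the vertex set `I` whose edges (indexed by `F`) are the pairs `α f`. -/
def assignGraph [Fintype I] (F : Finset β) (α : β → Sym2 I) : EHypergraph I β where
  verts := Finset.univ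
  edges := F
  inc := fun f => Sym2.lift ⟨fun i j => ({i, j} : Finset I), fun _ _ => Finset.pair_comm _ _⟩ (α f)
  inc_sub := fun _ _ => fun _ _ => Finset.mem_univ _

/-- The collapsed hypergraph `H ∘ S` with collapsed vertex `uc`. -/
def collapse (H : EHypergraph V β) (S : Finset V) (uc : V) : EHypergraph V β where
  verts := (H.verts \ S) ∪ {uc}
  edges := H.edges.filter (fun e => (H.inc e ∩ (H.verts \ S)).Nonempty)
  inc := fun e => if (H.inc e ∩ S).Nonempty then (H.inc e \ S) ∪ {uc} else H.inc e
  inc_sub := by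
    intro e he
    rw [Finset.mem_filter] at he
    split
    · intro x hx
      rcases Finset.mem_union.mp hx with h | h
      · exact Finset.mem_union_left _
          (Finset.mem_sdiff.mpr ⟨H.inc_sub e he.1 (Finset.mem_sdiff.mp h).1,
            (Finset.mem_sdiff.mp h).2⟩)
      · exact Finset.mem_union_right _ h
    · intro x hx
      rename_i h
      exact Finset.mem_union_left _ (Finset.mem_sdiff.mpr
        ⟨H.inc_sub e he.1 hx, fun hxS => h ⟨x, Finset.mem_inter.mpr ⟨hx, hxS⟩⟩⟩)

/-- Lifting a walk along an inclusion of hypergraphs. -/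
def Walk.lift {H1 H2 : EHypergraph V β} (hv : H1.verts ⊆ H2.verts) (he : H1.edges ⊆ H2.edges)
    (hi : ∀ e ∈ H1.edges, H1.inc e ⊆ H2.inc e) : ∀ {u v : V}, H1.Walk u v → H2.Walk u v
  | _, _, .nil x hx => .nil x (hv hx)
  | _, _, .cons u a w e hee hu hvv hne p =>
      .cons u a w e (he hee) (hi e hee hu) (hi e hee hvv) hne (Walk.lift hv he hi p)

theorem Walk.steps_lift {H1 H2 : EHypergraph V β} (hv : H1.verts ⊆ H2.verts)
    (he : H1.edges ⊆ H2.edges) (hi : ∀ e ∈ H1.edges, H1.inc e ⊆ H2.inc e)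
    {u v : V} (w : H1.Walk u v) : (w.lift hv he hi).steps = w.steps := by
  induction w with
  | nil => rfl
  | cons u a w e hee hu hvv hne p ih => simp [Walk.lift, Walk.steps, ih]

theorem Walk.edgeList_lift {H1 H2 : EHypergraph V β} (hv : H1.verts ⊆ H2.verts)
    (he : H1.edges ⊆ H2.edges) (hi : ∀ e ∈ H1.edges, H1.inc e ⊆ H2.inc e)
    {u v : V} (w : H1.Walk u v) : (w.lift hv he hi).edgeList = w.edgeList := by
  simp [Walk.edgeList, Walk.steps_lift]

theorem Walk.anchors_lift {H1 H2 : EHypergraph V β} (hv : H1.verts ⊆ H2.verts)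
    (he : H1.edges ⊆ H2.edges) (hi : ∀ e ∈ H1.edges, H1.inc e ⊆ H2.inc e)
    {u v : V} (w : H1.Walk u v) : (w.lift hv he hi).anchors = w.anchors := by
  simp [Walk.anchors, Walk.steps_lift]

/-- Lifting a closed trail along an inclusion of hypergraphs. -/
def ClosedTrail.lift {H1 H2 : EHypergraph V β} (hv : H1.verts ⊆ H2.verts)
    (he : H1.edges ⊆ H2.edges) (hi : ∀ e ∈ H1.edges, H1.inc e ⊆ H2.inc e)
    (T : H1.ClosedTrail) : H2.ClosedTrail where
  base := T.base
  walk := T.walk.lift hv he hi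
  two_le := by rw [Walk.edgeList_lift]; exact T.two_le
  nodup := by rw [Walk.edgeList_lift]; exact T.nodup

end EHypergraph

namespace EHypergraph
variable [DecidableEq V] [DecidableEq β]

namespace Walk

theorem steps_facts {H : EHypergraph V β} : ∀ {u v : V} (w : H.Walk u v),
    ∀ s ∈ w.steps, s.2.1 ∈ H.edges ∧ s.1 ∈ H.inc s.2.1 ∧ s.2.2 ∈ H.inc s.2.1 ∧ s.1 ≠ s.2.2
  | _, _, .nil _ _, s, hs => by simp [steps] at hs
  | _, _, .cons u a w e he hu hva hne p, s, hs => by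
      rcases List.mem_cons.mp hs with h | h
      · subst h; exact ⟨he, hu, hva, hne⟩
      · exact steps_facts p s h

theorem start_mem_verts {H : EHypergraph V β} : ∀ {u v : V} (w : H.Walk u v),
    w.steps ≠ [] → u ∈ H.verts
  | _, _, .nil _ _, h => absurd rfl h
  | _, _, .cons u a w e he hu hva hne p, _ => H.inc_sub e he hu

def castStart {H : EHypergraph V β} {a b c : V} (h : a = b) (w : H.Walk b c) : H.Walk a c :=
  h ▸ w

theorem steps_castStart {H : EHypergraph V β} {a b c : V} (h : a = b) (w : H.Walk b c) :
    (castStart h w).steps = w.steps := by subst h; rfl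

def transport {H H' : EHypergraph V β} (φ : V → V) :
    ∀ {u v : V} (w : H.Walk u v), φ v ∈ H'.verts →
      (∀ s ∈ w.steps, φ s.1 ≠ φ s.2.2 →
        s.2.1 ∈ H'.edges ∧ φ s.1 ∈ H'.inc s.2.1 ∧ φ s.2.2 ∈ H'.inc s.2.1) →
      H'.Walk (φ u) (φ v)
  | _, _, .nil x _, hv, _ => .nil (φ x) hv
  | _, _, .cons u a w e he hu hva hne p, hv, hs =>
      if h : φ u = φ a then
        castStart h (transport φ p hv (fun s hs' => hs s (List.mem_cons_of_mem _ hs')))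
      else
        .cons (φ u) (φ a) (φ w) e (hs _ (List.mem_cons_self) h).1
          (hs _ (List.mem_cons_self) h).2.1 (hs _ (List.mem_cons_self) h).2.2 h
          (transport φ p hv (fun s hs' => hs s (List.mem_cons_of_mem _ hs')))

theorem steps_transport {H H' : EHypergraph V β} (φ : V → V) {u v : V} (w : H.Walk u v)
    (hv : φ v ∈ H'.verts)
    (hs : ∀ s ∈ w.steps, φ s.1 ≠ φ s.2.2 →
        s.2.1 ∈ H'.edges ∧ φ s.1 ∈ H'.inc s.2.1 ∧ φ s.2.2 ∈ H'.inc s.2.1) :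
    (transport (H' := H') φ w hv hs).steps =
      (w.steps.filter (fun s => φ s.1 ≠ φ s.2.2)).map (fun s => (φ s.1, s.2.1, φ s.2.2)) := by
  induction w with
  | nil x hx => rw [transport]; rfl
  | cons u a w e he hu hva hne p ih =>
    rw [transport]
    by_cases h : φ u = φ a
    · rw [dif_pos h, steps_castStart, ih]
      simp [Walk.steps, List.filter_cons, h]
    · rw [dif_neg h]
      simp only [Walk.steps, List.filter_cons]
      rw [if_pos (by simpa using h)]
      simp [ih]

theorem countP_cross {H : EHypergraph V β} (part : V → Fin 2) :
    ∀ {u v : V} (w : H.Walk u v),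
      (w.steps.countP (fun s => part s.1 ≠ part s.2.2)) % 2 = if part u = part v then 0 else 1
  | _, _, .nil x _ => by simp [steps]
  | _, _, .cons u a w e he hu hva hne p => by
      have hp := countP_cross part p
      simp only [steps, List.countP_cons]
      have hite : (if (decide ¬ part u = part a) = true then 1 else 0)
          = (if part u = part a then 0 else 1) := by
        by_cases h : part u = part a <;> simp [h]
      rw [hite]
      by_cases h : part u = part a <;> by_cases h2 : part a = part w
      · rw [if_pos h2] at hp; rw [if_pos h, if_pos (h.trans h2)]; omega
      · rw [if_neg h2] at hp; rw [if_pos h, if_neg (fun hc => h2 (h ▸ hc))]; omega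
      · rw [if_pos h2] at hp; rw [if_neg h, if_neg (fun hc => h (hc.trans h2.symm))]; omega
      · rw [if_neg h2] at hp
        have h4 : ∀ x y z : Fin 2, ¬ x = y → ¬ y = z → x = z := by decide
        rw [if_neg h, if_pos (h4 _ _ _ h h2)]; omega

theorem all_anchor_mem {H : EHypergraph V β} (part : V → Fin 2) (Q : Finset V) :
    ∀ {u v : V} (w : H.Walk u v),
      (∀ s ∈ w.steps, part s.1 = part s.2.2) →
      (∀ x ∈ H.verts, part x = part u → x ∈ Q) →
      ∀ s ∈ w.steps, s.1 ∈ Q ∧ s.2.2 ∈ Q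
  | _, _, .nil _ _, _, _, s, hs => by simp [steps] at hs
  | _, _, .cons u a w e he hu hva hne p, hnc, hQ, s, hs => by
      have huV : u ∈ H.verts := H.inc_sub e he hu
      have haV : a ∈ H.verts := H.inc_sub e he hva
      have hua : part u = part a := hnc _ (List.mem_cons_self)
      rcases List.mem_cons.mp hs with h | h
      · subst h
        exact ⟨hQ u huV rfl, hQ a haV hua.symm⟩
      · exact all_anchor_mem part Q p (fun s hs => hnc s (List.mem_cons_of_mem _ hs))
          (fun x hx hpx => hQ x hx (hpx.trans hua.symm)) s h

end Walk
end EHypergraph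

open EHypergraph in
/-- Corollary 6.3: if `H` has an Euler tour, then there is an edge cut assignment `α` with
`|α⁻¹(01)|` even such that either (i) `α⁻¹(01) = ∅` and (up to swapping) `H^α[V_0]` has an
Euler tour and `H^α[V_1]` is empty, or (ii) `α⁻¹(01) ≠ ∅` and each `H^α ∘ V_i` has an
Euler tour traversing the collapsed vertex via each edge of `{f° : f ∈ α⁻¹(01)}`. -/
theorem exists_eca_collapsed_of_hasEulerTour
    {V β : Type} [DecidableEq V] [DecidableEq β]
    (H : EHypergraph V β) (F : Finset β) (P : Fin 2 → Finset V)
    (hH : H.Connected) (hF : H.IsMinimalEdgeCut F)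
    (hP : H.IsCompUnionPartition F P)
    (uc : Fin 2 → V) (huc : ∀ i, uc i ∉ H.verts)
    (hT : H.HasEulerTour) :
    ∃ α : β → Sym2 (Fin 2), H.IsECA F P α ∧
      Even (F.filter (fun f => α f = s((0 : Fin 2), (1 : Fin 2)))).card ∧
      ((F.filter (fun f => α f = s((0 : Fin 2), (1 : Fin 2))) = ∅ ∧
          ∃ i : Fin 2, ((H.assign F P α).induce (P i)).HasEulerTour ∧
            ((H.assign F P α).induce (P (1 - i))).edges = ∅) ∨
       (F.filter (fun f => α f = s((0 : Fin 2), (1 : Fin 2))) ≠ ∅ ∧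
          ∀ i : Fin 2, ∃ T : ((H.assign F P α).collapse (P i) (uc i)).ClosedTrail,
            ((H.assign F P α).collapse (P i) (uc i)).IsEulerTour T ∧
            ∀ f ∈ F.filter (fun f => α f = s((0 : Fin 2), (1 : Fin 2))),
              T.traverses (uc i) f)) := by
  classical
  obtain ⟨T, hTour⟩ := hT
  have hFsub : F ⊆ H.edges := by
    obtain ⟨⟨S, hS1, hS2, hS3, rfl⟩, -⟩ := hF
    exact Finset.filter_subset _ _
  obtain ⟨hPne, hPsub, hPuniq, hPcomp⟩ := hP
  set part : V → Fin 2 := fun v => if v ∈ P 0 then 0 else 1 with hpartdef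
  have hmem_part : ∀ v ∈ H.verts, v ∈ P (part v) := by
    intro v hv
    by_cases h : v ∈ P 0
    · simpa [hpartdef, h] using h
    · obtain ⟨i, hi, -⟩ := hPuniq v hv
      have hi1 : i = 1 := by
        have : i ≠ 0 := fun hc => h (hc ▸ hi)
        omega
      simpa [hpartdef, h] using hi1 ▸ hi
  have hpart_eq : ∀ {v : V} {i : Fin 2}, v ∈ P i → part v = i := by
    intro v i hv
    have hvV := hPsub i hv
    obtain ⟨j, hj, hjuniq⟩ := hPuniq v hvV
    rw [hjuniq i hv, hjuniq (part v) (hmem_part v hvV)]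
  have hdisj : ∀ {v : V} {i j : Fin 2}, v ∈ P i → v ∈ P j → i = j := by
    intro v i j h1 h2
    rw [← hpart_eq h1, ← hpart_eq h2]
  have hsf := Walk.steps_facts T.walk
  have hvert : ∀ s ∈ T.walk.steps, s.1 ∈ H.verts ∧ s.2.2 ∈ H.verts := fun s hs =>
    ⟨H.inc_sub _ (hsf s hs).1 (hsf s hs).2.1, H.inc_sub _ (hsf s hs).1 (hsf s hs).2.2.1⟩
  have hnodup : (T.walk.steps.map (fun s => s.2.1)).Nodup := T.nodup
  have hinj : ∀ ⦃s⦄, s ∈ T.walk.steps → ∀ ⦃t⦄, t ∈ T.walk.steps → s.2.1 = t.2.1 → s = t :=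
    List.inj_on_of_nodup_map hnodup
  set α : β → Sym2 (Fin 2) := fun f =>
    ((T.walk.steps.find? (fun s => decide (s.2.1 = f))).map
      (fun s => s(part s.1, part s.2.2))).getD s(0, 0) with hαdef
  have hα : ∀ s ∈ T.walk.steps, α s.2.1 = s(part s.1, part s.2.2) := by
    intro s hs
    have hex : (T.walk.steps.find? (fun t => decide (t.2.1 = s.2.1))).isSome := by
      rw [List.find?_isSome]
      exact ⟨s, hs, by simp⟩
    obtain ⟨t, ht⟩ := Option.isSome_iff_exists.mp hex
    have hts : t = s := hinj (List.mem_of_find?_eq_some ht) hs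
      (by simpa using List.find?_some ht)
    rw [hαdef]
    simp only [ht, hts, Option.map_some, Option.getD_some]
  have hedge_step : ∀ e ∈ H.edges, ∃ s ∈ T.walk.steps, s.2.1 = e := by
    intro e he
    have h1 := hTour e he
    rw [Walk.edgeList] at h1
    obtain ⟨s, hs, h2⟩ := List.mem_map.mp h1
    exact ⟨s, hs, h2⟩
  have hcrossF : ∀ s ∈ T.walk.steps, part s.1 ≠ part s.2.2 → s.2.1 ∈ F := by
    intro s hs hne
    by_contra hnF
    have hsub := hPcomp s.2.1 (hsf s hs).1 hnF (part s.1)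
      ⟨s.1, Finset.mem_inter.mpr ⟨(hsf s hs).2.1, hmem_part _ (hvert s hs).1⟩⟩
    exact hne (hpart_eq (hsub (hsf s hs).2.2.1)).symm
  have hfin2 : ∀ a b : Fin 2, a ≠ b → s(a, b) = s((0 : Fin 2), 1) := by decide
  have hfin2' : ∀ a b : Fin 2, s(a, b) = s((0 : Fin 2), 1) → a ≠ b := by decide
  have hECA : H.IsECA F P α := by
    intro f hf i j hij
    obtain ⟨s, hs, rfl⟩ := hedge_step f (hFsub hf)
    rw [hα s hs] at hij
    have hm1 : s.1 ∈ H.inc s.2.1 ∩ P (part s.1) :=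
      Finset.mem_inter.mpr ⟨(hsf s hs).2.1, hmem_part _ (hvert s hs).1⟩
    have hm2 : s.2.2 ∈ H.inc s.2.1 ∩ P (part s.2.2) :=
      Finset.mem_inter.mpr ⟨(hsf s hs).2.2.1, hmem_part _ (hvert s hs).2⟩
    have hcard : ∀ k : Fin 2, part s.1 = k → part s.2.2 = k →
        2 ≤ (H.inc s.2.1 ∩ P k).card := by
      intro k h1 h2
      exact Finset.one_lt_card.mpr ⟨s.1, h1 ▸ hm1, s.2.2, h2 ▸ hm2, (hsf s hs).2.2.2⟩
    rcases Sym2.eq_iff.mp hij with ⟨h1, h2⟩ | ⟨h1, h2⟩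
    · exact ⟨⟨s.1, h1 ▸ hm1⟩, ⟨s.2.2, h2 ▸ hm2⟩,
        fun hij2 => hcard i h1 (hij2 ▸ h2)⟩
    · exact ⟨⟨s.2.2, h2 ▸ hm2⟩, ⟨s.1, h1 ▸ hm1⟩,
        fun hij2 => hcard i (hij2 ▸ h1) h2⟩
  set L : List β := (T.walk.steps.filter (fun s => part s.1 ≠ part s.2.2)).map
    (fun s => s.2.1) with hLdef
  have hLsub : L.Sublist T.walk.edgeList := List.filter_sublist.map _
  have hLnd : L.Nodup := hLsub.nodup T.nodup
  have hLset : ∀ f, f ∈ L ↔ f ∈ F.filter (fun f => α f = s((0 : Fin 2), 1)) := by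
    intro f
    simp only [hLdef, Finset.mem_filter, List.mem_map, List.mem_filter,
      decide_eq_true_eq]
    constructor
    · rintro ⟨s, ⟨hs, hc⟩, rfl⟩
      exact ⟨hcrossF s hs hc, (hα s hs).trans (hfin2 _ _ hc)⟩
    · rintro ⟨hfF, hα01⟩
      obtain ⟨s, hs, rfl⟩ := hedge_step f (hFsub hfF)
      exact ⟨s, ⟨hs, hfin2' _ _ ((hα s hs).symm.trans hα01)⟩, rfl⟩
  have hcard : (F.filter (fun f => α f = s((0 : Fin 2), 1))).card =
      T.walk.steps.countP (fun s => part s.1 ≠ part s.2.2) := by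
    have h1 : F.filter (fun f => α f = s((0 : Fin 2), 1)) = L.toFinset := by
      ext f
      rw [List.mem_toFinset, hLset]
    rw [h1, List.toFinset_card_of_nodup hLnd, hLdef, List.length_map,
      List.countP_eq_length_filter]
  have heven : Even (F.filter (fun f => α f = s((0 : Fin 2), 1))).card := by
    rw [hcard, Nat.even_iff]
    have hc2 := Walk.countP_cross part T.walk
    rwa [if_pos rfl] at hc2
  have hincA : ∀ s ∈ T.walk.steps,
      s.1 ∈ (H.assign F P α).inc s.2.1 ∧ s.2.2 ∈ (H.assign F P α).inc s.2.1 := by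
    intro s hs
    simp only [assign]
    split
    · rw [hα s hs]
      constructor
      · refine Finset.mem_inter.mpr ⟨(hsf s hs).2.1, ?_⟩
        simp only [pairFinset, Sym2.lift_mk]
        exact Finset.mem_union_left _ (hmem_part _ (hvert s hs).1)
      · refine Finset.mem_inter.mpr ⟨(hsf s hs).2.2.1, ?_⟩
        simp only [pairFinset, Sym2.lift_mk]
        exact Finset.mem_union_right _ (hmem_part _ (hvert s hs).2)
    · exact ⟨(hsf s hs).2.1, (hsf s hs).2.2.1⟩
  have hincFsub : ∀ s ∈ T.walk.steps, s.2.1 ∈ F →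
      (H.assign F P α).inc s.2.1 ⊆ P (part s.1) ∪ P (part s.2.2) := by
    intro s hs hsF
    simp only [assign, if_pos hsF, hα s hs, pairFinset, Sym2.lift_mk]
    exact Finset.inter_subset_right
  have hincNF : ∀ e ∉ F, (H.assign F P α).inc e = H.inc e := by
    intro e he
    simp [assign, he]
  have hstepsne : T.walk.steps ≠ [] := by
    intro h
    have h2 := T.two_le
    rw [Walk.edgeList, h] at h2
    simp at h2
  have hbase : T.base ∈ H.verts := Walk.start_mem_verts T.walk hstepsne
  have hfin3 : ∀ x y k : Fin 2, x ≠ y → x = k ∨ y = k := by decide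
  refine ⟨α, hECA, heven, ?_⟩
  by_cases hemp : F.filter (fun f => α f = s((0 : Fin 2), 1)) = ∅
  · -- Case (i): no crossing edges
    refine Or.inl ⟨hemp, part T.base, ?_, ?_⟩
    · -- Euler tour of the induced hypergraph
      have hnc : ∀ s ∈ T.walk.steps, part s.1 = part s.2.2 := by
        intro s hs
        by_contra hc
        have hmem : s.2.1 ∈ F.filter (fun f => α f = s((0 : Fin 2), 1)) :=
          Finset.mem_filter.mpr ⟨hcrossF s hs hc, (hα s hs).trans (hfin2 _ _ hc)⟩
        simp [hemp] at hmem
      have hallQ := Walk.all_anchor_mem part (P (part T.base)) T.walk hnc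
        (fun x hx hpx => hpx ▸ hmem_part x hx)
      set H' := (H.assign F P α).induce (P (part T.base)) with hH'def
      have hsteph : ∀ s ∈ T.walk.steps, (id s.1 : V) ≠ id s.2.2 →
          s.2.1 ∈ H'.edges ∧ (id s.1 : V) ∈ H'.inc s.2.1 ∧
            (id s.2.2 : V) ∈ H'.inc s.2.1 := by
        intro s hs _
        have hQ := hallQ s hs
        have hA := hincA s hs
        refine ⟨?_, Finset.mem_inter.mpr ⟨hA.1, hQ.1⟩, Finset.mem_inter.mpr ⟨hA.2, hQ.2⟩⟩
        exact Finset.mem_filter.mpr ⟨(hsf s hs).1,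
          ⟨s.1, Finset.mem_inter.mpr ⟨hA.1, hQ.1⟩⟩⟩
      have hv' : (id T.base : V) ∈ H'.verts := hmem_part T.base hbase
      set walk' := Walk.transport (H' := H') id T.walk hv' hsteph with hw'def
      have hfilt : T.walk.steps.filter (fun s => (id s.1 : V) ≠ id s.2.2) =
          T.walk.steps := List.filter_eq_self.mpr
        (fun s hs => by simpa using (hsf s hs).2.2.2)
      have hEL : walk'.edgeList = T.walk.edgeList := by
        simp only [Walk.edgeList, hw'def, Walk.steps_transport, hfilt, List.map_map]
        rfl
      refine ⟨⟨T.base, walk', ?_, ?_⟩, ?_⟩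
      · rw [hEL]; exact T.two_le
      · rw [hEL]; exact T.nodup
      · intro e he
        have he' := Finset.mem_filter.mp he
        show e ∈ walk'.edgeList
        rw [hEL]
        exact hTour e he'.1
    · -- the other side is empty
      rw [Finset.eq_empty_iff_forall_notMem]
      intro e he
      have hnc : ∀ s ∈ T.walk.steps, part s.1 = part s.2.2 := by
        intro s hs
        by_contra hc
        have hmem : s.2.1 ∈ F.filter (fun f => α f = s((0 : Fin 2), 1)) :=
          Finset.mem_filter.mpr ⟨hcrossF s hs hc, (hα s hs).trans (hfin2 _ _ hc)⟩
        simp [hemp] at hmem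
      have hallQ := Walk.all_anchor_mem part (P (part T.base)) T.walk hnc
        (fun x hx hpx => hpx ▸ hmem_part x hx)
      have he' : e ∈ (H.assign F P α).edges ∧
          ((H.assign F P α).inc e ∩ P (1 - part T.base)).Nonempty :=
        Finset.mem_filter.mp he
      obtain ⟨heH, x, hx⟩ := he'
      obtain ⟨s, hs, rfl⟩ := hedge_step e heH
      have hxi : x ∈ P (1 - part T.base) := (Finset.mem_inter.mp hx).2
      have hx1 : x ∈ (H.assign F P α).inc s.2.1 := (Finset.mem_inter.mp hx).1
      have hxPi : x ∈ P (part T.base) := by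
        by_cases hsF : s.2.1 ∈ F
        · have hsub := hincFsub s hs hsF hx1
          have h1 := hnc s hs
          have h2 : part s.1 = part T.base := hpart_eq (hallQ s hs).1
          rcases Finset.mem_union.mp hsub with h | h
          · exact h2 ▸ h
          · exact (h1.symm.trans h2) ▸ h
        · rw [hincNF _ hsF] at hx1
          exact hPcomp _ heH hsF (part T.base)
            ⟨s.1, Finset.mem_inter.mpr ⟨(hsf s hs).2.1, (hallQ s hs).1⟩⟩ hx1
      exact (by decide : ∀ k : Fin 2, k ≠ 1 - k) _ (hdisj hxPi hxi)
  · -- Case (ii): crossing edges exist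
    refine Or.inr ⟨hemp, fun i => ?_⟩
    set φ : V → V := fun v => if v ∈ P i then uc i else v with hφdef
    set H' := (H.assign F P α).collapse (P i) (uc i) with hH'def
    have hφP : ∀ v ∈ P i, φ v = uc i := fun v hv => by simp [hφdef, hv]
    have hφN : ∀ v, v ∉ P i → φ v = v := fun v hv => by simp [hφdef, hv]
    have hφmem : ∀ e, ∀ x ∈ (H.assign F P α).inc e, φ x ∈ H'.inc e := by
      intro e x hx
      simp only [hH'def, collapse]
      by_cases hxi : x ∈ P i
      · rw [if_pos ⟨x, Finset.mem_inter.mpr ⟨hx, hxi⟩⟩, hφP x hxi]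
        exact Finset.mem_union_right _ (Finset.mem_singleton_self _)
      · rw [hφN x hxi]
        split
        · exact Finset.mem_union_left _ (Finset.mem_sdiff.mpr ⟨hx, hxi⟩)
        · exact hx
    have hedgemem : ∀ s ∈ T.walk.steps, ∀ x, x ∈ (H.assign F P α).inc s.2.1 →
        x ∈ H.verts → x ∉ P i → s.2.1 ∈ H'.edges := by
      intro s hs x hx hxV hxi
      exact Finset.mem_filter.mpr ⟨(hsf s hs).1,
        ⟨x, Finset.mem_inter.mpr ⟨hx, Finset.mem_sdiff.mpr ⟨hxV, hxi⟩⟩⟩⟩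
    have hsteph : ∀ s ∈ T.walk.steps, φ s.1 ≠ φ s.2.2 →
        s.2.1 ∈ H'.edges ∧ φ s.1 ∈ H'.inc s.2.1 ∧ φ s.2.2 ∈ H'.inc s.2.1 := by
      intro s hs hne
      have hA := hincA s hs
      have hV := hvert s hs
      refine ⟨?_, hφmem _ _ hA.1, hφmem _ _ hA.2⟩
      by_cases h1 : s.1 ∈ P i
      · by_cases h2 : s.2.2 ∈ P i
        · exact absurd ((hφP _ h1).trans (hφP _ h2).symm) hne
        · exact hedgemem s hs _ hA.2 hV.2 h2
      · exact hedgemem s hs _ hA.1 hV.1 h1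
    have hv' : φ T.base ∈ H'.verts := by
      simp only [hH'def, collapse]
      by_cases h : T.base ∈ P i
      · rw [hφP _ h]
        exact Finset.mem_union_right _ (Finset.mem_singleton_self _)
      · rw [hφN _ h]
        exact Finset.mem_union_left _ (Finset.mem_sdiff.mpr ⟨hbase, h⟩)
    set walk' := Walk.transport (H' := H') φ T.walk hv' hsteph with hw'def
    have hkept : ∀ s ∈ T.walk.steps, part s.1 ≠ part s.2.2 → φ s.1 ≠ φ s.2.2 := by
      intro s hs hc
      have hV := hvert s hs
      rcases hfin3 _ _ i hc with h | h
      · have h1 : s.1 ∈ P i := h ▸ hmem_part _ hV.1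
        have h2 : s.2.2 ∉ P i := fun hc2 => hc (h.trans (hpart_eq hc2).symm)
        rw [hφP _ h1, hφN _ h2]
        exact fun hcc => huc i (hcc ▸ hV.2)
      · have h1 : s.2.2 ∈ P i := h ▸ hmem_part _ hV.2
        have h2 : s.1 ∉ P i := fun hc2 => hc ((hpart_eq hc2).trans h.symm)
        rw [hφN _ h2, hφP _ h1]
        exact fun hcc => huc i (hcc ▸ hV.1)
    have h1 : walk'.edgeList =
        (T.walk.steps.filter (fun s => φ s.1 ≠ φ s.2.2)).map (fun s => s.2.1) := by
      simp only [Walk.edgeList, hw'def, Walk.steps_transport, List.map_map]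
      rfl
    have hcge2 : 2 ≤ T.walk.steps.countP (fun s => part s.1 ≠ part s.2.2) := by
      rw [← hcard]
      have h0 : (F.filter (fun f => α f = s((0 : Fin 2), 1))).card ≠ 0 := by
        simpa [Finset.card_eq_zero] using hemp
      obtain ⟨k, hk⟩ := heven
      omega
    have hmono : T.walk.steps.countP (fun s => part s.1 ≠ part s.2.2) ≤
        T.walk.steps.countP (fun s => φ s.1 ≠ φ s.2.2) :=
      List.countP_mono_left (fun s hs h => by
        simpa using hkept s hs (by simpa using h))
    have hlen : 2 ≤ walk'.edgeList.length := by
      have hh : walk'.edgeList.length =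
          T.walk.steps.countP (fun s => φ s.1 ≠ φ s.2.2) := by
        rw [h1, List.length_map, ← List.countP_eq_length_filter]
      omega
    have hnd : walk'.edgeList.Nodup := by
      rw [h1]
      exact (List.filter_sublist.map _).nodup hnodup
    refine ⟨⟨φ T.base, walk', hlen, hnd⟩, ?_, ?_⟩
    · intro e he
      have he' : e ∈ (H.assign F P α).edges ∧
          ((H.assign F P α).inc e ∩ ((H.assign F P α).verts \ P i)).Nonempty :=
        Finset.mem_filter.mp he
      obtain ⟨s, hs, rfl⟩ := hedge_step e he'.1
      have hkeep : φ s.1 ≠ φ s.2.2 := by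
        by_cases hu1 : s.1 ∈ P i
        · by_cases hu2 : s.2.2 ∈ P i
          · exfalso
            obtain ⟨x, hx⟩ := he'.2
            obtain ⟨hx1, hx2⟩ := Finset.mem_inter.mp hx
            have hx3 : x ∉ P i := (Finset.mem_sdiff.mp hx2).2
            apply hx3
            by_cases hsF : s.2.1 ∈ F
            · have hsub := hincFsub s hs hsF hx1
              have e1 : part s.1 = i := hpart_eq hu1
              have e2 : part s.2.2 = i := hpart_eq hu2
              rcases Finset.mem_union.mp hsub with h | h
              · exact e1 ▸ h
              · exact e2 ▸ h
            · rw [hincNF _ hsF] at hx1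
              exact hPcomp _ he'.1 hsF i
                ⟨s.1, Finset.mem_inter.mpr ⟨(hsf s hs).2.1, hu1⟩⟩ hx1
          · rw [hφP _ hu1, hφN _ hu2]
            exact fun hcc => huc i (hcc ▸ (hvert s hs).2)
        · by_cases hu2 : s.2.2 ∈ P i
          · rw [hφN _ hu1, hφP _ hu2]
            exact fun hcc => huc i (hcc ▸ (hvert s hs).1)
          · rw [hφN _ hu1, hφN _ hu2]
            exact (hsf s hs).2.2.2
      show s.2.1 ∈ walk'.edgeList
      rw [h1]
      exact List.mem_map.mpr ⟨s, List.mem_filter.mpr ⟨hs, by simpa using hkeep⟩, rfl⟩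
    · intro f hf
      obtain ⟨hfF, hf01⟩ := Finset.mem_filter.mp hf
      obtain ⟨s, hs, rfl⟩ := hedge_step f (hFsub hfF)
      have hcr : part s.1 ≠ part s.2.2 := hfin2' _ _ ((hα s hs).symm.trans hf01)
      have hkeep := hkept s hs hcr
      refine ⟨(φ s.1, s.2.1, φ s.2.2), ?_, rfl, ?_⟩
      · show _ ∈ walk'.steps
        rw [hw'def, Walk.steps_transport]
        exact List.mem_map.mpr ⟨s, List.mem_filter.mpr ⟨hs, by simpa using hkeep⟩, rfl⟩
      · rcases hfin3 _ _ i hcr with h | h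
        · left
          exact hφP _ (h ▸ hmem_part _ (hvert s hs).1)
        · right
          exact hφP _ (h ▸ hmem_part _ (hvert s hs).2)
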